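/- Let λ ∈ (0,1). Then ∑_{x=2}^∞ (x(x-1)^{x-2}/(x-2)!) λ^x e^{-xλ} = ((1-λ+λ²)/(1-λ)³) λ e^{-λ} − λ e^{-λ}. -/

import Mathlib

/-!
Put `t = λ e^{-λ}` and `n = x - 1`: the series is `t · ∑_{n ≥ 1} (n + 1) nⁿ / n! · tⁿ`, so it
suffices to know `∑ₙ n^{n+d} / n! · tⁿ` for `d = 0, 1` (Lagrange inversion for the tree function).
For small `λ`, expanding `e^{-nλ}` gives an absolutely convergent double series; regrouped by powers
of `λ`, the coefficient of `λ^N` is the `N`-th forward difference of `r ↦ r^{N+d}` at `0` divided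
by `N!`, which is `1` for `d = 0` and `(N+1).choose 2` for `d = 1`. Hence the two sums are
`1 / (1 - λ)` and `λ / (1 - λ)³`. The power series in `t` has radius at least `1/e`, and
`λ e^{-λ} < 1/e` for `λ ≠ 1`, so both sides of the identity are real-analytic in `λ ∈ (0, 1)`,
and it extends from small `λ` to the whole interval.
-/

open Finset Nat Function Real
open fwdDiff

theorem fwdDiff_pow {R : Type*} [CommRing R] (n : ℕ) :
    Δ_[1] (fun r : R ↦ r ^ n) = ∑ i ∈ range n, n.choose i • fun r ↦ r ^ i := by
  ext x
  simp [nsmul_eq_mul, fwdDiff, add_pow, sum_range_succ, mul_comm]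

theorem fwdDiff_iter_pow_succ_apply_zero {R : Type*} [CommRing R] (N : ℕ) :
    Δ_[1] ^[N] (fun r : R ↦ r ^ (N + 1)) 0 = N ! * (N + 1).choose 2 := by
  induction N with
  | zero => simp
  | succ N ih =>
    rw [iterate_succ_apply, fwdDiff_pow, fwdDiff_iter_finsetSum, sum_range_succ, sum_range_succ,
      sum_eq_zero fun i hi ↦ ?_]
    · rw [zero_add, Pi.add_apply, fwdDiff_iter_const_smul, fwdDiff_iter_const_smul]
      simp only [Pi.smul_apply, ih, fwdDiff_iter_eq_factorial, Pi.natCast_apply, nsmul_eq_mul,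
        Nat.choose_succ_self_right]
      rw [Nat.choose_symm_of_eq_add (by ring : N + 1 + 1 = N + 2), factorial_succ]
      have hpascal : ((N + 2).choose 2 : R) = N + 1 + (N + 1).choose 2 := by
        rw [Nat.choose_succ_succ, Nat.choose_one_right]; push_cast; ring
      have htriangle : ((N + 1).choose 2 : R) * 2 = (N + 1) * N := by
        have h : (N + 1).choose 2 * 2 = (N + 1) * N := by
          simpa using (Nat.add_one_mul_choose_eq N 1).symm
        simpa using congrArg (Nat.cast : ℕ → R) h
      push_cast [hpascal]
      linear_combination (N ! : R) * htriangle
    · rw [fwdDiff_iter_const_smul, fwdDiff_iter_pow_eq_zero_of_lt (mem_range.mp hi), smul_zero]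

theorem HasSum.sum_antidiagonal {α A : Type*} [AddCommMonoid α] [TopologicalSpace α]
    [ContinuousAdd α] [RegularSpace α] [AddCommMonoid A] [HasAntidiagonal A] {f : A × A → α}
    {a : α} (h : HasSum f a) : HasSum (fun n ↦ ∑ p ∈ antidiagonal n, f p) a :=
  (HasAntidiagonal.sigmaAntidiagonalEquivProd.hasSum_iff.mpr h).sigma fun n ↦
    (antidiagonal n).hasSum f

theorem hasSum_succ_choose_two_mul_geometric_of_norm_lt_one {𝕜 : Type*} [NormedField 𝕜]
    [CompleteSpace 𝕜] {x : 𝕜} (hx : ‖x‖ < 1) :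
    HasSum (fun n ↦ ((n + 1).choose 2 : 𝕜) * x ^ n) (x / (1 - x) ^ 3) := by
  rw [← hasSum_nat_add_iff' 1]
  simpa [pow_succ, mul_comm, mul_left_comm, mul_assoc, add_assoc, div_eq_mul_inv] using
    (hasSum_choose_mul_geometric_of_norm_lt_one 2 hx).mul_left x

theorem Real.hasSum_pow_div_factorial_exp (x : ℝ) : HasSum (fun n ↦ x ^ n / n !) (exp x) := by
  rw [exp_eq_exp_ℝ]
  exact NormedSpace.expSeries_div_hasSum_exp x

theorem pow_self_div_factorial_le_exp_one_pow (n : ℕ) : (n : ℝ) ^ n / n ! ≤ exp 1 ^ n := by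
  simpa [← exp_nat_mul] using pow_div_factorial_le_exp (n : ℝ) n.cast_nonneg n

theorem lt_one_of_mul_exp_add_one_lt_one {x : ℝ} (hx0 : 0 ≤ x) (hx : x * exp (x + 1) < 1) :
    x < 1 := by
  nlinarith [add_one_le_exp (x + 1)]

theorem mul_exp_add_one_lt_one {x : ℝ} (hx : x < 1 / 8) : x * exp (x + 1) < 1 := by
  have he : exp 1 < 2.72 := exp_one_lt_d9.trans (by norm_num)
  calc x * exp (x + 1) ≤ 1 / 8 * exp (1 + 1) := by gcongr; linarith
    _ = 1 / 8 * exp 1 ^ 2 := by rw [exp_add, sq]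
    _ < 1 := by nlinarith [exp_pos 1]

theorem mul_exp_neg_lt_exp_neg_one {x : ℝ} (hx : x ≠ 1) : x * exp (-x) < exp (-1) := by
  have h := add_one_lt_exp (sub_ne_zero.mpr hx)
  calc x * exp (-x) < exp (x - 1) * exp (-x) := by gcongr; linarith
    _ = exp (-1) := by rw [← exp_add]; ring_nf

noncomputable def powSelfExpTerm (d : ℕ) (x : ℝ) (p : ℕ × ℕ) : ℝ :=
  (p.1 : ℝ) ^ (p.1 + d) / p.1 ! * x ^ p.1 * ((-(p.1 * x)) ^ p.2 / p.2 !)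

theorem hasSum_powSelfExpTerm_fiber (d : ℕ) (x : ℝ) (n : ℕ) :
    HasSum (fun j ↦ powSelfExpTerm d x (n, j)) ((n : ℝ) ^ (n + d) / n ! * (x * exp (-x)) ^ n) := by
  have h := (hasSum_pow_div_factorial_exp (-(n * x))).mul_left ((n : ℝ) ^ (n + d) / n ! * x ^ n)
  rwa [mul_pow, ← exp_nat_mul, mul_neg, ← mul_assoc]

theorem summable_powSelfExpTerm (d : ℕ) {x : ℝ} (hx0 : 0 ≤ x) (hx : x * exp (x + 1) < 1) :
    Summable (powSelfExpTerm d x) := by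
  have hnorm (p : ℕ × ℕ) : ‖powSelfExpTerm d x p‖ =
      (p.1 : ℝ) ^ (p.1 + d) / p.1 ! * x ^ p.1 * ((p.1 * x) ^ p.2 / p.2 !) := by
    simp [powSelfExpTerm, abs_of_nonneg hx0]
  have hfiber (n : ℕ) : HasSum (fun j ↦ (n : ℝ) ^ (n + d) / n ! * x ^ n * ((n * x) ^ j / j !))
      ((n : ℝ) ^ (n + d) / n ! * x ^ n * exp (n * x)) :=
    (hasSum_pow_div_factorial_exp _).mul_left _
  refine Summable.of_norm ?_
  simp_rw [hnorm]
  refine (summable_prod_of_nonneg fun p ↦ by positivity).mpr ⟨fun n ↦ (hfiber n).summable, ?_⟩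
  simp only [fun n ↦ (hfiber n).tsum_eq]
  refine Summable.of_nonneg_of_le (fun n ↦ by positivity) (fun n ↦ ?_)
    (summable_pow_mul_geometric_of_norm_lt_one d (r := x * exp (x + 1)) ?_)
  · calc (n : ℝ) ^ (n + d) / n ! * x ^ n * exp (n * x)
        = (n : ℝ) ^ d * ((n : ℝ) ^ n / n !) * (x * exp x) ^ n := by
          rw [mul_pow, ← exp_nat_mul]; ring
      _ ≤ (n : ℝ) ^ d * exp 1 ^ n * (x * exp x) ^ n := by
          gcongr; exact pow_self_div_factorial_le_exp_one_pow n
      _ = (n : ℝ) ^ d * (x * exp (x + 1)) ^ n := by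
          rw [exp_add, mul_assoc, mul_pow, mul_pow, mul_pow]; ring
  · rwa [norm_of_nonneg (by positivity)]

theorem sum_antidiagonal_powSelfExpTerm (d : ℕ) (x : ℝ) (N : ℕ) :
    ∑ p ∈ antidiagonal N, powSelfExpTerm d x p =
      Δ_[1] ^[N] (fun r : ℝ ↦ r ^ (N + d)) 0 / N ! * x ^ N := by
  rw [fwdDiff_iter_eq_sum_shift, ← Nat.sum_antidiagonal_eq_sum_range_succ
    (fun n j ↦ ((-1 : ℤ) ^ j * N.choose n) • (0 + n • (1 : ℝ)) ^ (N + d)), sum_div, sum_mul]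
  refine sum_congr rfl fun p hp ↦ ?_
  obtain ⟨n, j⟩ := p
  rw [HasAntidiagonal.mem_antidiagonal] at hp
  subst hp
  simp only [powSelfExpTerm, zero_add, nsmul_eq_mul, mul_one, zsmul_eq_mul, Int.cast_mul,
    Int.cast_pow, Int.cast_neg, Int.cast_one, Int.cast_natCast, Nat.cast_add_choose]
  field_simp
  ring

theorem hasSum_pow_self_mul_of_hasSum_fwdDiff (d : ℕ) {x a : ℝ} (hx0 : 0 ≤ x)
    (hx : x * exp (x + 1) < 1)
    (ha : HasSum (fun N ↦ Δ_[1] ^[N] (fun r : ℝ ↦ r ^ (N + d)) 0 / N ! * x ^ N) a) :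
    HasSum (fun n : ℕ ↦ (n : ℝ) ^ (n + d) / n ! * (x * exp (-x)) ^ n) a := by
  have hF := (summable_powSelfExpTerm d hx0 hx).hasSum
  have hdiag := hF.sum_antidiagonal
  simp only [sum_antidiagonal_powSelfExpTerm] at hdiag
  rw [ha.unique hdiag]
  exact hF.prod_fiberwise (hasSum_powSelfExpTerm_fiber d x)

theorem hasSum_pow_self_div_factorial_mul_pow {x : ℝ} (hx0 : 0 ≤ x) (hx : x * exp (x + 1) < 1) :
    HasSum (fun n : ℕ ↦ (n : ℝ) ^ n / n ! * (x * exp (-x)) ^ n) (1 - x)⁻¹ := by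
  refine hasSum_pow_self_mul_of_hasSum_fwdDiff 0 hx0 hx ((hasSum_geometric_of_lt_one hx0
    (lt_one_of_mul_exp_add_one_lt_one hx0 hx)).congr_fun fun N ↦ ?_)
  rw [add_zero, fwdDiff_iter_eq_factorial, Pi.natCast_apply]
  field_simp

theorem hasSum_pow_self_succ_div_factorial_mul_pow {x : ℝ} (hx0 : 0 ≤ x)
    (hx : x * exp (x + 1) < 1) :
    HasSum (fun n : ℕ ↦ (n : ℝ) ^ (n + 1) / n ! * (x * exp (-x)) ^ n) (x / (1 - x) ^ 3) := by
  have hx1 : ‖x‖ < 1 := by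
    rw [norm_of_nonneg hx0]; exact lt_one_of_mul_exp_add_one_lt_one hx0 hx
  refine hasSum_pow_self_mul_of_hasSum_fwdDiff 1 hx0 hx
    ((hasSum_succ_choose_two_mul_geometric_of_norm_lt_one hx1).congr_fun fun N ↦ ?_)
  rw [fwdDiff_iter_pow_succ_apply_zero]
  field_simp

noncomputable def momentCoeff (n : ℕ) : ℝ := (n + 1) * n ^ n / n !

theorem hasSum_momentCoeff_mul_pow_of_mul_exp_lt_one {x : ℝ} (hx0 : 0 ≤ x)
    (hx : x * exp (x + 1) < 1) :
    HasSum (fun n ↦ momentCoeff n * (x * exp (-x)) ^ n) ((1 - x + x ^ 2) / (1 - x) ^ 3) := by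
  have hx1 : 1 - x ≠ 0 := by linarith [lt_one_of_mul_exp_add_one_lt_one hx0 hx]
  rw [show (1 - x + x ^ 2) / (1 - x) ^ 3 = x / (1 - x) ^ 3 + (1 - x)⁻¹ by field_simp; ring]
  refine ((hasSum_pow_self_succ_div_factorial_mul_pow hx0 hx).add
    (hasSum_pow_self_div_factorial_mul_pow hx0 hx)).congr_fun fun n ↦ ?_
  simp only [momentCoeff, pow_succ]
  ring

theorem FormalMultilinearSeries.ofReal_inv_le_radius_ofScalars {c : ℕ → ℝ} {R : ℝ} (hR : 0 < R)
    (hc : ∀ n, |c n| ≤ (n + 1) * R ^ n) :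
    ENNReal.ofReal R⁻¹ ≤ (ofScalars ℝ c).radius := by
  refine ENNReal.le_of_forall_nnreal_lt fun r hr ↦ le_radius_of_summable_norm _ ?_
  have hRr : ‖R * r‖ < 1 := by
    rw [norm_of_nonneg (by positivity), ← lt_div_iff₀' hR, one_div]
    exact (ENNReal.ofReal_lt_ofReal_iff_of_nonneg r.coe_nonneg).mp (by simpa using hr)
  refine Summable.of_nonneg_of_le (fun n ↦ by positivity) (fun n ↦ ?_)
    ((summable_pow_mul_geometric_of_norm_lt_one 1 hRr).add (summable_geometric_of_norm_lt_one hRr))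
  calc ‖ofScalars ℝ c n‖ * r ^ n = |c n| * r ^ n := by rw [ofScalars_norm, norm_eq_abs]
    _ ≤ (n + 1) * R ^ n * r ^ n := by gcongr; exact hc n
    _ = n ^ 1 * (R * r) ^ n + (R * r) ^ n := by ring

noncomputable def momentSeries : FormalMultilinearSeries ℝ ℝ ℝ :=
  FormalMultilinearSeries.ofScalars ℝ momentCoeff

theorem ofReal_exp_neg_one_le_radius_momentSeries :
    ENNReal.ofReal (exp (-1)) ≤ momentSeries.radius := by
  refine exp_neg 1 ▸ FormalMultilinearSeries.ofReal_inv_le_radius_ofScalars (exp_pos 1) fun n ↦ ?_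
  rw [momentCoeff, abs_of_nonneg (by positivity), mul_div_assoc]
  gcongr
  exact pow_self_div_factorial_le_exp_one_pow n

theorem mul_exp_neg_mem_eball_radius_momentSeries {y : ℝ} (hy0 : 0 ≤ y) (hy1 : y < 1) :
    y * exp (-y) ∈ Metric.eball 0 momentSeries.radius := by
  rw [Metric.mem_eball, edist_zero_right, ← ofReal_norm]
  refine lt_of_lt_of_le ?_ ofReal_exp_neg_one_le_radius_momentSeries
  rw [ENNReal.ofReal_lt_ofReal_iff (exp_pos _), norm_of_nonneg (by positivity)]
  exact mul_exp_neg_lt_exp_neg_one hy1.ne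

theorem hasFPowerSeriesOnBall_momentSeries :
    HasFPowerSeriesOnBall momentSeries.sum momentSeries 0 momentSeries.radius :=
  momentSeries.hasFPowerSeriesOnBall
    (pos_of_gt (mul_exp_neg_mem_eball_radius_momentSeries le_rfl one_pos))

theorem hasSum_momentCoeff_mul_pow_momentSeries_sum {y : ℝ} (hy0 : 0 ≤ y) (hy1 : y < 1) :
    HasSum (fun n ↦ momentCoeff n * (y * exp (-y)) ^ n) (momentSeries.sum (y * exp (-y))) := by
  simpa [momentSeries, FormalMultilinearSeries.ofScalars_apply_eq, mul_comm] using
    hasFPowerSeriesOnBall_momentSeries.hasSum (mul_exp_neg_mem_eball_radius_momentSeries hy0 hy1)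

theorem analyticOnNhd_momentSeries_sum_mul_exp_neg :
    AnalyticOnNhd ℝ (fun y ↦ momentSeries.sum (y * exp (-y))) (Set.Ioo 0 1) := fun y hy ↦
  (hasFPowerSeriesOnBall_momentSeries.analyticAt_of_mem
    (mul_exp_neg_mem_eball_radius_momentSeries hy.1.le hy.2)).comp
    (f := fun y ↦ y * exp (-y)) (by fun_prop)

theorem hasSum_momentCoeff_mul_pow {x : ℝ} (h0 : 0 < x) (h1 : x < 1) :
    HasSum (fun n ↦ momentCoeff n * (x * exp (-x)) ^ n) ((1 - x + x ^ 2) / (1 - x) ^ 3) := by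
  have hcont : Set.EqOn (fun y ↦ momentSeries.sum (y * exp (-y)))
      (fun y ↦ (1 - y + y ^ 2) / (1 - y) ^ 3) (Set.Ioo 0 1) := by
    refine analyticOnNhd_momentSeries_sum_mul_exp_neg.eqOn_of_preconnected_of_eventuallyEq
      (fun y hy ↦ ?_) isPreconnected_Ioo (z₀ := 1 / 16) (by norm_num) ?_
    · have : (1 - y) ^ 3 ≠ 0 := pow_ne_zero 3 (by linarith [hy.2])
      fun_prop (disch := assumption)
    · filter_upwards [Ioo_mem_nhds (show (0 : ℝ) < 1 / 16 by norm_num)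
        (show (1 : ℝ) / 16 < 1 / 8 by norm_num)] with y hy
      exact (hasSum_momentCoeff_mul_pow_momentSeries_sum hy.1.le (by linarith [hy.2])).unique
        (hasSum_momentCoeff_mul_pow_of_mul_exp_lt_one hy.1.le (mul_exp_add_one_lt_one hy.2))
  have hx : momentSeries.sum (x * exp (-x)) = (1 - x + x ^ 2) / (1 - x) ^ 3 := hcont ⟨h0, h1⟩
  exact hx ▸ hasSum_momentCoeff_mul_pow_momentSeries_sum h0.le h1

theorem momentCoeff_succ_mul (x : ℝ) (k : ℕ) :
    ((k + 2 : ℕ) : ℝ) * (((k + 1 : ℕ) ^ k : ℕ) : ℝ) / k ! * x ^ (k + 2)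
        * exp (-((k + 2 : ℕ) : ℝ) * x) =
      x * exp (-x) * (momentCoeff (k + 1) * (x * exp (-x)) ^ (k + 1)) := by
  have hexp : exp (-((k + 2 : ℕ) : ℝ) * x) = exp (-x) ^ (k + 2) := by
    rw [← exp_nat_mul]; push_cast; ring_nf
  rw [hexp, momentCoeff, factorial_succ]
  push_cast
  field_simp
  ring

/-- Second-moment series identity: for `0 < λ < 1`,
`∑_{x=2}^∞ (x (x-1)^{x-2}/(x-2)!) λ^x e^{-xλ}
  = ((1-λ+λ²)/(1-λ)³) λe^{-λ} - λe^{-λ}` (indexed by `x = k + 2`). -/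
theorem stmt11 (lam : ℝ) (h0 : 0 < lam) (h1 : lam < 1) :
    ∑' k : ℕ,
      ((k + 2 : ℕ) : ℝ) * ((((k + 1 : ℕ) ^ k : ℕ)) : ℝ) / (Nat.factorial k)
        * lam ^ (k + 2) * Real.exp (-((k + 2 : ℕ) : ℝ) * lam)
    = ((1 - lam + lam ^ 2) / (1 - lam) ^ 3) * (lam * Real.exp (-lam))
        - lam * Real.exp (-lam) := by
  have hshift := (hasSum_nat_add_iff' 1).mpr (hasSum_momentCoeff_mul_pow h0 h1)
  rw [tsum_congr (momentCoeff_succ_mul lam), tsum_mul_left, hshift.tsum_eq, sum_range_one,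
    pow_zero, mul_one, show momentCoeff 0 = 1 by simp [momentCoeff]]
  ring
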